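/- arXiv:1509.04918 — 4 statements merged into one kernel-verified Lean document; each statement's English description precedes it below -/
import Mathlib

section
/- For positive random variables Λ and M on a common probability space, the total variation distance between the mixed Poisson distributions MixPo(Λ) and MixPo(M) satisfies d_TV(MixPo(Λ), MixPo(M)) ≤ E[min(|√Λ − √M|, |Λ − M|)]. -/
/-!
Given the mixing variables the two laws are Poisson, and by dominated convergence the difference
of the mixed probabilities of `A` is the integral of the difference of the Poisson probabilities
of `A`; so it suffices to bound `d_TV(Po a, Po b)` for fixed `a, b ≥ 0`. For laws `p, q` on a
countable set, `|p(A) - q(A)| ≤ ½ ∑ |p - q|`. For `a ≤ b` one has `Po b ≥ e^{-(b-a)} Po a`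
pointwise, whence `∑ |Po a - Po b| ≤ 2 (1 - e^{-(b-a)}) ≤ 2 (b - a)`. By Cauchy–Schwarz,
`∑ |p - q| ≤ ‖√p - √q‖₂ ‖√p + √q‖₂ = 2 √(1 - B²)` with `B = ∑ √(p q)`, and for Poisson laws
`B = exp (-(√a - √b)² / 2)`, so `1 - B² ≤ (√a - √b)²`.
-/

open MeasureTheory Real

section DiscreteLaws

variable {ι : Type*} {p q : ι → ℝ}

theorem tsum_abs_sub_le_two_mul_sqrt_one_sub_sq (hp : HasSum p 1) (hq : HasSum q 1)
    (hp0 : ∀ i, 0 ≤ p i) (hq0 : ∀ i, 0 ≤ q i) {B : ℝ} (hB : HasSum (fun i => √(p i * q i)) B) :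
    ∑' i, |p i - q i| ≤ 2 * √(1 - B ^ 2) := by
  set u := fun i => |√(p i) - √(q i)|
  set v := fun i => √(p i) + √(q i)
  have hp_sq (i : ι) : √(p i) ^ 2 = p i := sq_sqrt (hp0 i)
  have hq_sq (i : ι) : √(q i) ^ 2 = q i := sq_sqrt (hq0 i)
  have h_geom (i : ι) : √(p i * q i) = √(p i) * √(q i) := sqrt_mul (hp0 i) _
  have hv0 (i : ι) : 0 ≤ v i := add_nonneg (sqrt_nonneg _) (sqrt_nonneg _)
  have h_factor (i : ι) : |p i - q i| = u i * v i := by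
    rw [← abs_of_nonneg (hv0 i), ← abs_mul]
    congr 1
    linear_combination -(hp_sq i) + hq_sq i
  have hu : HasSum (fun i => u i ^ 2) (2 - 2 * B) := by
    have h := (hp.add hq).sub (hB.mul_left 2)
    rw [one_add_one_eq_two] at h
    refine h.congr_fun fun i => ?_
    rw [sq_abs, h_geom]
    linear_combination hp_sq i + hq_sq i
  have hv : HasSum (fun i => v i ^ 2) (2 + 2 * B) := by
    have h := (hp.add hq).add (hB.mul_left 2)
    rw [one_add_one_eq_two] at h
    refine h.congr_fun fun i => ?_
    rw [h_geom]
    linear_combination hp_sq i + hq_sq i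
  have hB_le : B ≤ 1 := by linarith [hu.nonneg fun i => sq_nonneg (u i)]
  have hB_ge : -1 ≤ B := by linarith [hv.nonneg fun i => sq_nonneg (v i)]
  obtain ⟨C, -, hC, h_uv⟩ := inner_le_Lp_mul_Lq_hasSum_of_nonneg (f := u) (g := v)
    HolderConjugate.two_two (sqrt_nonneg (2 - 2 * B)) (sqrt_nonneg (2 + 2 * B))
    (fun i => abs_nonneg _) hv0
    (by simpa only [rpow_two, sq_sqrt (by linarith : 0 ≤ 2 - 2 * B)] using hu)
    (by simpa only [rpow_two, sq_sqrt (by linarith : 0 ≤ 2 + 2 * B)] using hv)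
  rw [tsum_congr h_factor, h_uv.tsum_eq]
  calc C ≤ √(2 - 2 * B) * √(2 + 2 * B) := hC
    _ = 2 * √(1 - B ^ 2) := by
      rw [← sqrt_mul (by linarith), show (2 - 2 * B) * (2 + 2 * B) = 2 ^ 2 * (1 - B ^ 2) by ring,
        sqrt_mul (by positivity), sqrt_sq zero_le_two]

theorem tsum_abs_sub_le_of_mul_le (hp : HasSum p 1) (hq : HasSum q 1) (hp0 : ∀ i, 0 ≤ p i)
    {c : ℝ} (hc : c ≤ 1) (hpq : ∀ i, c * p i ≤ q i) :
    ∑' i, |p i - q i| ≤ 2 * (1 - c) := by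
  have h_dom (i : ι) : |p i - q i| ≤ (1 - c) * p i + (q i - c * p i) := by
    rw [abs_sub_le_iff]
    constructor <;> nlinarith [hp0 i, hpq i]
  have h_sum : HasSum (fun i => (1 - c) * p i + (q i - c * p i)) (2 * (1 - c)) := by
    have h := (hp.mul_left (1 - c)).add (hq.sub (hp.mul_left c))
    rwa [show (1 - c) * 1 + (1 - c * 1) = 2 * (1 - c) by ring] at h
  exact hasSum_le h_dom (hp.summable.sub hq.summable).abs.hasSum h_sum

theorem abs_tsum_indicator_le_half_tsum_abs {d : ι → ℝ} (hd : HasSum d 0) (A : Set ι) :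
    |∑' i, A.indicator d i| ≤ (∑' i, |d i|) / 2 := by
  have hs := hd.summable
  have h_compl : ∑' i, A.indicator d i + ∑' i, Aᶜ.indicator d i = 0 := by
    rw [← (hs.indicator A).tsum_add (hs.indicator Aᶜ), ← hd.tsum_eq]
    exact tsum_congr fun i => congrFun (Set.indicator_self_add_compl A d) i
  have h_compl_abs :
      ∑' i, |A.indicator d i| + ∑' i, |Aᶜ.indicator d i| = ∑' i, |d i| := by
    rw [← (hs.indicator A).abs.tsum_add (hs.indicator Aᶜ).abs]
    refine tsum_congr fun i => ?_
    by_cases hi : i ∈ A <;> simp [hi]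
  have h_abs_le (B : Set ι) : |∑' i, B.indicator d i| ≤ ∑' i, |B.indicator d i| :=
    norm_tsum_le_tsum_norm (hs.indicator B).norm
  have h_abs_compl := h_abs_le Aᶜ
  rw [eq_neg_of_add_eq_zero_right h_compl, abs_neg] at h_abs_compl
  linarith [h_abs_le A]

theorem abs_tsum_indicator_sub_le {s : ℝ} (hp : HasSum p s) (hq : HasSum q s) (A : Set ι) :
    |∑' i, A.indicator p i - ∑' i, A.indicator q i| ≤ (∑' i, |p i - q i|) / 2 := by
  have hd : HasSum (p - q) 0 := sub_self s ▸ hp.sub hq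
  rw [← (hp.summable.indicator A).tsum_sub (hq.summable.indicator A)]
  simpa only [Set.indicator_sub', Pi.sub_apply] using abs_tsum_indicator_le_half_tsum_abs hd A

end DiscreteLaws

noncomputable def poissonProb (a : ℝ) (k : ℕ) : ℝ := exp (-a) * a ^ k / k.factorial

theorem hasSum_poissonProb (a : ℝ) : HasSum (poissonProb a) 1 := by
  have h := (NormedSpace.expSeries_div_hasSum_exp a).mul_left (exp (-a))
  rw [← exp_eq_exp_ℝ, ← exp_add, neg_add_cancel, exp_zero] at h
  exact h.congr_fun fun k => mul_div_assoc _ _ _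

theorem poissonProb_nonneg {a : ℝ} (ha : 0 ≤ a) (k : ℕ) : 0 ≤ poissonProb a k := by
  unfold poissonProb; positivity

theorem continuous_poissonProb (k : ℕ) : Continuous (poissonProb · k) := by
  unfold poissonProb; fun_prop

theorem exp_neg_sub_mul_poissonProb_le {a b : ℝ} (ha : 0 ≤ a) (hab : a ≤ b) (k : ℕ) :
    exp (-(b - a)) * poissonProb a k ≤ poissonProb b k := by
  unfold poissonProb
  rw [← mul_div_assoc, ← mul_assoc, ← exp_add, show -(b - a) + -a = -b by ring]
  gcongr

theorem sqrt_poissonProb_mul {a b : ℝ} (ha : 0 ≤ a) (hb : 0 ≤ b) (k : ℕ) :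
    √(poissonProb a k * poissonProb b k)
      = exp (-(√a - √b) ^ 2 / 2) * poissonProb (√a * √b) k := by
  obtain ⟨s, hs, rfl⟩ : ∃ s, 0 ≤ s ∧ s ^ 2 = a := ⟨√a, sqrt_nonneg a, sq_sqrt ha⟩
  obtain ⟨t, ht, rfl⟩ : ∃ t, 0 ≤ t ∧ t ^ 2 = b := ⟨√b, sqrt_nonneg b, sq_sqrt hb⟩
  rw [sqrt_sq hs, sqrt_sq ht, ← sqrt_sq (mul_nonneg (exp_pos _).le
    (poissonProb_nonneg (mul_nonneg hs ht) k))]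
  congr 1
  have hexp : exp (-s ^ 2) * exp (-t ^ 2) = (exp (-(s - t) ^ 2 / 2) * exp (-(s * t))) ^ 2 := by
    rw [← exp_add, ← exp_add, ← exp_nat_mul]
    congr 1
    push_cast
    ring
  unfold poissonProb
  linear_combination ((s * t) ^ k / k.factorial) ^ 2 * hexp

theorem tsum_abs_sub_poissonProb_le_two_mul_abs_sqrt_sub {a b : ℝ} (ha : 0 ≤ a) (hb : 0 ≤ b) :
    ∑' k, |poissonProb a k - poissonProb b k| ≤ 2 * |√a - √b| := by
  set B := exp (-(√a - √b) ^ 2 / 2)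
  have hB : HasSum (fun k => √(poissonProb a k * poissonProb b k)) B := by
    simpa only [sqrt_poissonProb_mul ha hb, mul_one] using
      (hasSum_poissonProb (√a * √b)).mul_left B
  refine (tsum_abs_sub_le_two_mul_sqrt_one_sub_sq (hasSum_poissonProb a) (hasSum_poissonProb b)
    (poissonProb_nonneg ha) (poissonProb_nonneg hb) hB).trans ?_
  rw [← sqrt_sq_eq_abs]
  gcongr
  have : B ^ 2 = exp (-(√a - √b) ^ 2) := by rw [← exp_nat_mul]; push_cast; ring_nf
  linarith [one_sub_le_exp_neg ((√a - √b) ^ 2)]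

theorem tsum_abs_sub_poissonProb_le_two_mul_sub {a b : ℝ} (ha : 0 ≤ a) (hab : a ≤ b) :
    ∑' k, |poissonProb a k - poissonProb b k| ≤ 2 * (b - a) := by
  refine (tsum_abs_sub_le_of_mul_le (hasSum_poissonProb a) (hasSum_poissonProb b)
    (poissonProb_nonneg ha) (exp_le_one_iff.mpr (by linarith))
    (exp_neg_sub_mul_poissonProb_le ha hab)).trans ?_
  linarith [one_sub_le_exp_neg (b - a)]

theorem tsum_abs_sub_poissonProb_le_two_mul_abs_sub {a b : ℝ} (ha : 0 ≤ a) (hb : 0 ≤ b) :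
    ∑' k, |poissonProb a k - poissonProb b k| ≤ 2 * |a - b| := by
  rcases le_total a b with hab | hba
  · rw [abs_sub_comm]
    simpa [abs_of_nonneg (sub_nonneg.mpr hab)] using
      tsum_abs_sub_poissonProb_le_two_mul_sub ha hab
  · simp_rw [abs_sub_comm (poissonProb a _)]
    simpa [abs_of_nonneg (sub_nonneg.mpr hba)] using
      tsum_abs_sub_poissonProb_le_two_mul_sub hb hba

theorem abs_tsum_indicator_poissonProb_sub_le {a b : ℝ} (ha : 0 ≤ a) (hb : 0 ≤ b) (A : Set ℕ) :
    |∑' k, A.indicator (poissonProb a) k - ∑' k, A.indicator (poissonProb b) k|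
      ≤ min |√a - √b| |a - b| := by
  refine (abs_tsum_indicator_sub_le (hasSum_poissonProb a) (hasSum_poissonProb b) A).trans ?_
  rw [div_le_iff₀ two_pos, min_mul_of_nonneg _ _ two_pos.le, le_min_iff, mul_comm _ 2, mul_comm _ 2]
  exact ⟨tsum_abs_sub_poissonProb_le_two_mul_abs_sqrt_sub ha hb,
    tsum_abs_sub_poissonProb_le_two_mul_abs_sub ha hb⟩

theorem tsum_indicator_poissonProb_le_one {a : ℝ} (ha : 0 ≤ a) (A : Set ℕ) :
    ∑' k, A.indicator (poissonProb a) k ≤ 1 :=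
  (hasSum_poissonProb a).tsum_eq ▸ ((hasSum_poissonProb a).summable.indicator A).tsum_le_tsum
    (Set.indicator_le_self' fun k _ => poissonProb_nonneg ha k) (hasSum_poissonProb a).summable

section Mixture

variable {Ω : Type*} [MeasurableSpace Ω] {μ : Measure Ω} [IsFiniteMeasure μ] {X : Ω → ℝ}

theorem measurable_indicator_poissonProb (hX : Measurable X) (A : Set ℕ) (k : ℕ) :
    Measurable fun ω => A.indicator (poissonProb (X ω)) k := by
  by_cases hk : k ∈ A
  · simp only [Set.indicator_of_mem hk]
    exact (continuous_poissonProb k).measurable.comp hX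
  · simp [hk]

theorem integrable_tsum_indicator_poissonProb (hX : Measurable X) (hX0 : ∀ ω, 0 ≤ X ω)
    (A : Set ℕ) : Integrable (fun ω => ∑' k, A.indicator (poissonProb (X ω)) k) μ := by
  refine .of_bound (Measurable.tsum (measurable_indicator_poissonProb hX A)).aestronglyMeasurable
    1 (.of_forall fun ω => ?_)
  rw [norm_of_nonneg (tsum_nonneg fun k => Set.indicator_nonneg
    (fun k _ => poissonProb_nonneg (hX0 ω) k) k)]
  exact tsum_indicator_poissonProb_le_one (hX0 ω) A

theorem hasSum_indicator_integral_poissonProb (hX : Measurable X) (hX0 : ∀ ω, 0 ≤ X ω)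
    (A : Set ℕ) :
    HasSum (A.indicator fun k => ∫ ω, poissonProb (X ω) k ∂μ)
      (∫ ω, ∑' k, A.indicator (poissonProb (X ω)) k ∂μ) := by
  have h_swap : (A.indicator fun k => ∫ ω, poissonProb (X ω) k ∂μ)
      = fun k => ∫ ω, A.indicator (poissonProb (X ω)) k ∂μ := by
    funext k; by_cases hk : k ∈ A <;> simp [hk]
  rw [h_swap]
  refine hasSum_integral_of_dominated_convergence (fun k ω => poissonProb (X ω) k)
    (fun k => (measurable_indicator_poissonProb hX A k).aestronglyMeasurable)
    (fun k => .of_forall fun ω => ?_) (.of_forall fun ω => (hasSum_poissonProb (X ω)).summable)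
    (by simp_rw [(hasSum_poissonProb _).tsum_eq]; exact integrable_const 1)
    (.of_forall fun ω => ((hasSum_poissonProb (X ω)).summable.indicator A).hasSum)
  by_cases hk : k ∈ A <;> simp [hk, abs_of_nonneg, poissonProb_nonneg (hX0 ω) k]

end Mixture

/-- Total variation bound between two mixed Poisson distributions:
for positive random variables `Λ`, `M`,
`d_TV(MixPo Λ, MixPo M) ≤ E[min(|√Λ − √M|, |Λ − M|)]`. -/
theorem mixed_poisson_tv_bound
    {Ω : Type*} [MeasurableSpace Ω] (μ : Measure Ω) [IsProbabilityMeasure μ]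
    (Λ M : Ω → ℝ) (hΛmeas : Measurable Λ) (hMmeas : Measurable M)
    (hΛpos : ∀ ω, 0 < Λ ω) (hMpos : ∀ ω, 0 < M ω)
    (hΛint : Integrable Λ μ) (hMint : Integrable M μ) :
    ∀ A : Set ℕ,
      |(∑' k : ℕ, Set.indicator A
            (fun k => ∫ ω, Real.exp (-(Λ ω)) * (Λ ω) ^ k / (Nat.factorial k : ℝ) ∂μ) k)
        - (∑' k : ℕ, Set.indicator A
            (fun k => ∫ ω, Real.exp (-(M ω)) * (M ω) ^ k / (Nat.factorial k : ℝ) ∂μ) k)|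
      ≤ ∫ ω, min |Real.sqrt (Λ ω) - Real.sqrt (M ω)| |Λ ω - M ω| ∂μ := by
  intro A
  have hΛ0 (ω : Ω) : 0 ≤ Λ ω := (hΛpos ω).le
  have hM0 (ω : Ω) : 0 ≤ M ω := (hMpos ω).le
  change |∑' k, A.indicator (fun k => ∫ ω, poissonProb (Λ ω) k ∂μ) k
    - ∑' k, A.indicator (fun k => ∫ ω, poissonProb (M ω) k ∂μ) k| ≤ _
  rw [(hasSum_indicator_integral_poissonProb hΛmeas hΛ0 A).tsum_eq,
    (hasSum_indicator_integral_poissonProb hMmeas hM0 A).tsum_eq,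
    ← integral_sub (integrable_tsum_indicator_poissonProb hΛmeas hΛ0 A)
      (integrable_tsum_indicator_poissonProb hMmeas hM0 A)]
  have h_min_integrable : Integrable (fun ω => min |√(Λ ω) - √(M ω)| |Λ ω - M ω|) μ := by
    refine (hΛint.sub hMint).abs.mono' (by fun_prop) (.of_forall fun ω => ?_)
    rw [norm_of_nonneg (le_min (abs_nonneg _) (abs_nonneg _))]
    exact min_le_right _ _
  exact abs_integral_le_integral_abs.trans <|
    integral_mono_of_nonneg (.of_forall fun _ => abs_nonneg _) h_min_integrable
      (.of_forall fun ω => abs_tsum_indicator_poissonProb_sub_le (hΛ0 ω) (hM0 ω) A)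
end

section
/- Let λ ≠ μ be positive reals and let Y_t have the probability mass function p_0(t) = μ p̃(t), p_n(t) = (1 − μ p̃(t))(1 − λ p̃(t))(λ p̃(t))^{n−1} for n ≥ 1, where p̃(t) = (e^{(λ−μ)t} − 1)/(λ e^{(λ−μ)t} − μ). Then E[1/Y_t | Y_t > 0] = ((λ−μ)/(λ e^{(λ−μ)t} − λ)) · log((λ e^{(λ−μ)t} − μ)/(λ−μ)), and this is at most ((λ−μ)/(λ e^{(λ−μ)t} − λ)) · (log(λ/(λ−μ)) + (λ−μ)t). -/
open Real

/-! Conditionally on survival, `Y_t` is geometric on `{1, 2, …}` with ratio `x = λ p̃(t)`, so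
`E[1/Y_t | Y_t > 0] = (1 - x) / x · (-log (1 - x))` by the Mercator series; with
`E = e^{(λ-μ)t}` one has `1 - x = (λ - μ)/(λE - μ)`, which turns this into the closed form.
The bound only drops `-μ` inside the logarithm. -/

lemma hasSum_pow_div_succ {x : ℝ} (hx0 : x ≠ 0) (hx : |x| < 1) :
    HasSum (fun n : ℕ => x ^ n / (n + 1)) (-log (1 - x) / x) := by
  have h := (hasSum_pow_div_log_of_abs_lt_one hx).div_const x
  rwa [show (fun n : ℕ => x ^ (n + 1) / ((n : ℝ) + 1) / x)
      = fun n : ℕ => x ^ n / ((n : ℝ) + 1) from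
    funext fun n => by rw [pow_succ, mul_div_right_comm, mul_div_cancel_right₀ _ hx0]] at h

lemma tsum_zeroModifiedGeometric_div_succ_div {a x : ℝ} (ha : a ≠ 0) (hx0 : x ≠ 0)
    (hx : |x| < 1) :
    (∑' n : ℕ, a * (1 - x) * x ^ n / (n + 1)) / a = (1 - x) / x * -log (1 - x) := by
  simp_rw [mul_div_assoc]
  rw [tsum_mul_left, (hasSum_pow_div_succ hx0 hx).tsum_eq]
  field_simp

section BirthDeath

variable {lam mu E : ℝ}

lemma one_sub_mul_div_sub_eq (hD : lam * E - mu ≠ 0) :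
    1 - lam * ((E - 1) / (lam * E - mu)) = (lam - mu) / (lam * E - mu) := by
  field_simp
  ring

lemma one_sub_div_mul_neg_log_one_sub (hD : lam * E - mu ≠ 0) :
    let x := lam * ((E - 1) / (lam * E - mu))
    (1 - x) / x * -log (1 - x)
      = (lam - mu) / (lam * E - lam) * log ((lam * E - mu) / (lam - mu)) := by
  intro x
  have hx : 1 - x = (lam - mu) / (lam * E - mu) := one_sub_mul_div_sub_eq hD
  rw [hx, ← log_inv, inv_div]
  congr 1
  rw [show x = lam * (E - 1) / (lam * E - mu) by ring, div_div_div_cancel_right₀ hD]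
  ring

lemma log_sub_div_le_log_div_add {s : ℝ} (hmu : 0 ≤ mu) (hlm : mu < lam)
    (hD : mu < lam * exp s) :
    log ((lam * exp s - mu) / (lam - mu)) ≤ log (lam / (lam - mu)) + s := by
  have hlam : 0 < lam := hmu.trans_lt hlm
  calc log ((lam * exp s - mu) / (lam - mu))
      ≤ log (lam / (lam - mu) * exp s) := by
        refine log_le_log (div_pos (sub_pos.mpr hD) (sub_pos.mpr hlm)) ?_
        rw [div_mul_eq_mul_div]
        gcongr
        linarith
    _ = log (lam / (lam - mu)) + s := by
        rw [log_mul (div_pos hlam (by linarith)).ne' (exp_pos s).ne', log_exp]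

end BirthDeath

/-- Conditional expected reciprocal population size of a (supercritical) linear
birth-death process at time `t`, given survival, and the stated upper bound. -/
theorem bd_expected_reciprocal (lam mu t : ℝ)
    (hmu : 0 < mu) (hlm : mu < lam) (ht : 0 < t) :
    let pt : ℝ := (Real.exp ((lam - mu) * t) - 1) / (lam * Real.exp ((lam - mu) * t) - mu)
    let p : ℕ → ℝ := fun n =>
      if n = 0 then mu * pt else (1 - mu * pt) * (1 - lam * pt) * (lam * pt) ^ (n - 1)
    (∑' n : ℕ, p (n + 1) / ((n : ℝ) + 1)) / (1 - p 0)
        = (lam - mu) / (lam * Real.exp ((lam - mu) * t) - lam)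
            * Real.log ((lam * Real.exp ((lam - mu) * t) - mu) / (lam - mu)) ∧
    (∑' n : ℕ, p (n + 1) / ((n : ℝ) + 1)) / (1 - p 0)
        ≤ (lam - mu) / (lam * Real.exp ((lam - mu) * t) - lam)
            * (Real.log (lam / (lam - mu)) + (lam - mu) * t) := by
  intro pt p
  have hE : 1 < exp ((lam - mu) * t) := one_lt_exp_iff.mpr (mul_pos (by linarith) ht)
  have hD : mu < lam * exp ((lam - mu) * t) := by nlinarith
  have hpt : 0 < pt := div_pos (by linarith) (by linarith)
  have hx : 0 < 1 - lam * pt := by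
    rw [one_sub_mul_div_sub_eq (by linarith)]
    exact div_pos (by linarith) (by linarith)
  have hx0 : 0 < lam * pt := mul_pos (by linarith) hpt
  have hmu_lt : mu * pt < lam * pt := by gcongr
  have hcond : (∑' n : ℕ, p (n + 1) / ((n : ℝ) + 1)) / (1 - p 0)
      = (lam - mu) / (lam * exp ((lam - mu) * t) - lam)
        * log ((lam * exp ((lam - mu) * t) - mu) / (lam - mu)) := by
    simp only [p, Nat.succ_ne_zero, if_true, if_false, Nat.add_sub_cancel]
    rw [tsum_zeroModifiedGeometric_div_succ_div (by linarith) hx0.ne'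
      (abs_lt.mpr ⟨by linarith, by linarith⟩)]
    exact one_sub_div_mul_neg_log_one_sub (by linarith)
  refine ⟨hcond, hcond ▸ mul_le_mul_of_nonneg_left ?_ ?_⟩
  · exact log_sub_div_le_log_div_add hmu.le hlm hD
  · exact div_nonneg (by linarith) (by nlinarith)
end

section
/- For a supercritical linear birth-death process with λ > μ ≥ 0 and initial value 1, the conditional probability of eventual extinction given survival to time T equals (μ/λ) e^{−(λ−μ)T}. -/
/-!
Writing `E = e^{(λ-μ)T}` and `p = (E-1)/(λE-μ)`, the law of `Y_T` is the modified geometric law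
`P(Y_T = 0) = μp`, `P(Y_T = n+1) = (1-μp)(1-λp)(λp)^n`. Conditioned on `Y_T > 0` it is geometric,
so its generating function at `s` is `s(1-λp)/(1-sλp)`. At `s = μ/λ` this is
`(μ/λ)(1-λp)/(1-μp)`, and `(1-λp)/(1-μp) = 1/E`.
-/

open Real

theorem tsum_pow_succ_mul_modifiedGeometric_div (s a b : ℝ) (hsb : |s * b| < 1) (ha : a ≠ 1) :
    (∑' n : ℕ, s ^ (n + 1) * ((1 - a) * (1 - b) * b ^ n)) / (1 - a)
      = s * (1 - b) / (1 - s * b) := by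
  have hterm : ∀ n : ℕ, s ^ (n + 1) * ((1 - a) * (1 - b) * b ^ n)
      = s * (1 - a) * (1 - b) * (s * b) ^ n := fun n => by ring
  have hsb' : 1 - s * b ≠ 0 := by
    intro h
    rw [show s * b = 1 by linarith, abs_one] at hsb
    exact lt_irrefl _ hsb
  rw [tsum_congr hterm, tsum_mul_left, tsum_geometric_of_abs_lt_one hsb]
  field_simp [sub_ne_zero.mpr (Ne.symm ha)]

section BirthDeath

variable {lam mu E : ℝ}

theorem abs_mul_div_lt_one_of_one_le (hmu : 0 ≤ mu) (hlm : mu < lam) (hE : 1 ≤ E) :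
    |mu * ((E - 1) / (lam * E - mu))| < 1 := by
  have hD : 0 < lam * E - mu := by nlinarith
  rw [← mul_div_assoc, abs_of_nonneg (div_nonneg (by nlinarith) hD.le), div_lt_one hD]
  nlinarith

theorem one_sub_mul_div_one_sub_mul_eq_inv (hD : lam * E - mu ≠ 0) (hlm : mu ≠ lam) (hE : E ≠ 0) :
    (1 - lam * ((E - 1) / (lam * E - mu))) / (1 - mu * ((E - 1) / (lam * E - mu))) = E⁻¹ := by
  have hsurv : 1 - lam * ((E - 1) / (lam * E - mu)) = (lam - mu) / (lam * E - mu) := by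
    rw [eq_div_iff hD, sub_mul, mul_div_assoc', div_mul_cancel₀ _ hD]
    ring
  have hnonext : 1 - mu * ((E - 1) / (lam * E - mu)) = (lam - mu) * E / (lam * E - mu) := by
    rw [eq_div_iff hD, sub_mul, mul_div_assoc', div_mul_cancel₀ _ hD]
    ring
  rw [hsurv, hnonext]
  field_simp [sub_ne_zero.mpr (Ne.symm hlm)]

end BirthDeath

/-- Conditional extinction probability given survival to time `T` for a
supercritical linear birth-death process:
`E[(μ/λ)^{Y_T} | Y_T > 0] = (μ/λ) e^{−(λ−μ)T}`. -/
theorem bd_conditional_extinction (lam mu T : ℝ)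
    (hmu : 0 ≤ mu) (hlm : mu < lam) (hT : 0 < T) :
    let pt : ℝ := (Real.exp ((lam - mu) * T) - 1) / (lam * Real.exp ((lam - mu) * T) - mu)
    let p : ℕ → ℝ := fun n =>
      if n = 0 then mu * pt else (1 - mu * pt) * (1 - lam * pt) * (lam * pt) ^ (n - 1)
    (∑' n : ℕ, (mu / lam) ^ (n + 1) * p (n + 1)) / (1 - p 0)
      = (mu / lam) * Real.exp (-(lam - mu) * T) := by
  intro pt p
  have hlam : lam ≠ 0 := (hmu.trans_lt hlm).ne'
  have hE : 1 < exp ((lam - mu) * T) := one_lt_exp_iff.mpr (mul_pos (by linarith) hT)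
  have hsb : (mu / lam) * (lam * pt) = mu * pt := by field_simp
  have hmupt : |mu * pt| < 1 := abs_mul_div_lt_one_of_one_le hmu hlm hE.le
  have hp : (∑' n : ℕ, (mu / lam) ^ (n + 1) * p (n + 1)) / (1 - p 0)
      = (mu / lam) * (1 - lam * pt) / (1 - mu * pt) := by
    rw [← hsb]
    exact tsum_pow_succ_mul_modifiedGeometric_div _ _ _ (hsb ▸ hmupt)
      (hsb ▸ (lt_of_abs_lt hmupt).ne)
  rw [hp, mul_div_assoc, one_sub_mul_div_one_sub_mul_eq_inv (by nlinarith) hlm.ne (by positivity),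
    neg_mul, exp_neg]
end

section
/- Let λ > μ ≥ 0 and T > 0. Define F_*(t) = 1 − (e^{−λt} − e^{−(λ−μ)T} e^{−μt})/(1 − e^{−(λ−μ)T}) for t ∈ [0,T]. Then F_* is a cumulative distribution function on [0,T] (nondecreasing, F_*(0) = 0, F_*(T) = 1), and 1 − F_*(t) ≤ e^{−λt} for all t ∈ [0,T]; i.e., the distribution with CDF F_* is stochastically dominated by Exp(λ). -/
/-!
Factor the numerator of the survival function as
`e^{-λt} - e^{-(λ-μ)T} e^{-μt} = e^{-λt} (1 - e^{-(λ-μ)(T-t)})`, so that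
`1 - F_*(t) = e^{-λt} · φ(t)` with `φ = survivalFactor (λ-μ) T`. On `[0,T]` the factor `φ`
is antitone with values in `[0,1]`, `φ(0) = 1` and `φ(T) = 0`, and the product of two
nonnegative antitone functions is antitone.
-/

open Real Set

lemma exp_neg_mul_sub_exp_mul_exp (lam mu T t : ℝ) :
    exp (-lam * t) - exp (-(lam - mu) * T) * exp (-mu * t)
      = exp (-lam * t) * (1 - exp (-(lam - mu) * (T - t))) := by
  rw [mul_sub, mul_one, ← exp_add, ← exp_add]
  ring_nf

noncomputable def survivalFactor (κ T t : ℝ) : ℝ :=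
  (1 - exp (-κ * (T - t))) / (1 - exp (-κ * T))

section survivalFactor

variable {κ T : ℝ}

lemma one_sub_exp_neg_mul_pos (hκ : 0 < κ) (hT : 0 < T) : 0 < 1 - exp (-κ * T) := by
  rw [sub_pos, exp_lt_one_iff]
  nlinarith

lemma antitone_survivalFactor (hκ : 0 < κ) (hT : 0 < T) : Antitone (survivalFactor κ T) := by
  intro a b hab
  unfold survivalFactor
  gcongr ?_ / _
  · exact (one_sub_exp_neg_mul_pos hκ hT).le
  · exact sub_le_sub_left (exp_le_exp.2 (by nlinarith)) 1

lemma survivalFactor_zero (hκ : 0 < κ) (hT : 0 < T) : survivalFactor κ T 0 = 1 := by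
  rw [survivalFactor, sub_zero, div_self (one_sub_exp_neg_mul_pos hκ hT).ne']

lemma survivalFactor_self (κ T : ℝ) : survivalFactor κ T T = 0 := by
  simp [survivalFactor]

lemma survivalFactor_nonneg (hκ : 0 < κ) (hT : 0 < T) {t : ℝ} (ht : t ≤ T) :
    0 ≤ survivalFactor κ T t :=
  survivalFactor_self κ T ▸ antitone_survivalFactor hκ hT ht

lemma survivalFactor_le_one (hκ : 0 < κ) (hT : 0 < T) {t : ℝ} (ht : 0 ≤ t) :
    survivalFactor κ T t ≤ 1 :=
  survivalFactor_zero hκ hT ▸ antitone_survivalFactor hκ hT ht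

end survivalFactor

lemma antitone_exp_neg_mul {lam : ℝ} (hlam : 0 ≤ lam) : Antitone fun t => exp (-lam * t) :=
  fun _ _ hab => exp_le_exp.2 (by nlinarith)

/-- `F_*` is a CDF on `[0,T]` and the corresponding distribution is
stochastically dominated by `Exp(λ)`: `1 − F_*(t) ≤ e^{−λt}`. -/
theorem age_cdf_dominated (lam mu T : ℝ)
    (hmu : 0 ≤ mu) (hlm : mu < lam) (hT : 0 < T) :
    let F : ℝ → ℝ := fun t =>
      1 - (Real.exp (-lam * t) - Real.exp (-(lam - mu) * T) * Real.exp (-mu * t))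
            / (1 - Real.exp (-(lam - mu) * T))
    MonotoneOn F (Set.Icc 0 T) ∧ F 0 = 0 ∧ F T = 1 ∧
      ∀ t ∈ Set.Icc (0:ℝ) T, 1 - F t ≤ Real.exp (-lam * t) := by
  intro F
  have hκ : 0 < lam - mu := sub_pos.2 hlm
  have hF : ∀ t, F t = 1 - exp (-lam * t) * survivalFactor (lam - mu) T t := fun t => by
    simp only [F, survivalFactor, exp_neg_mul_sub_exp_mul_exp, mul_div_assoc]
  refine ⟨fun a _ b hb hab => ?_, ?_, ?_, fun t ht => ?_⟩
  · rw [hF, hF, sub_le_sub_iff_left]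
    exact mul_le_mul (antitone_exp_neg_mul (hmu.trans hlm.le) hab)
      (antitone_survivalFactor hκ hT hab) (survivalFactor_nonneg hκ hT hb.2) (exp_pos _).le
  · rw [hF, survivalFactor_zero hκ hT]
    simp
  · rw [hF, survivalFactor_self]
    simp
  · rw [hF, sub_sub_cancel]
    exact mul_le_of_le_one_right (exp_pos _).le (survivalFactor_le_one hκ hT ht.1)
end
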